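/- arXiv:1805.08869 — 2 statements merged into one kernel-verified Lean document; each statement's English description precedes it below -/
import Mathlib

section
/- Let p be a prime, let G be a finite group possessing a normal Sylow p-subgroup P such that the quotient G/P is cyclic (necessarily of order prime to p), and let Γ₁, Γ₂ be subgroups of G with P ⊆ Γ₁. Then the order of Γ₁ ∩ Γ₂ equals gcd(|Γ₁|, |Γ₂|). -/
/-!
Reduce modulo `P`. Since `P ≤ Γ₁`, the quotient map `f : G → G/P` satisfies
`f(Γ₁ ∩ Γ₂) = f(Γ₁) ∩ f(Γ₂)`, and in the cyclic group `G/P` subgroups are determined by their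
orders, so `|f(Γ₁) ∩ f(Γ₂)| = gcd(|f(Γ₁)|, |f(Γ₂)|)`. With `k = |P ∩ Γ₂|` this gives
`|Γ₁ ∩ Γ₂| = k·gcd(|f Γ₁|, |f Γ₂|)`, `|Γ₁| = |P|·|f Γ₁|` and `|Γ₂| = k·|f Γ₂|`; as `k ∣ |P|` and
`|P|` is prime to `|G/P|`, hence to `|f Γ₂|`, the gcd of the last two is the first.
-/

open Subgroup

theorem Nat.gcd_mul_mul_of_dvd_of_coprime {k n a b : ℕ} (hk : k ∣ n) (hn : n.Coprime b) :
    (n * a).gcd (k * b) = k * a.gcd b := by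
  obtain ⟨t, rfl⟩ := hk
  rw [mul_assoc, Nat.gcd_mul_left, (Nat.Coprime.coprime_mul_left hn).gcd_mul_left_cancel a]

theorem IsCyclic.mem_subgroup_iff_orderOf_dvd_card {C : Type*} [CommGroup C] [Finite C]
    [IsCyclic C] (H : Subgroup C) {x : C} : x ∈ H ↔ orderOf x ∣ Nat.card H := by
  refine ⟨H.orderOf_dvd_natCard, fun hx => ?_⟩
  have hle : H ≤ (powMonoidHom (Nat.card H) : C →* C).ker := fun y hy =>
    orderOf_dvd_iff_pow_eq_one.mp (H.orderOf_dvd_natCard hy)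
  have hcard : Nat.card (powMonoidHom (Nat.card H) : C →* C).ker ≤ Nat.card H := by
    rw [IsCyclic.card_powMonoidHom_ker, Nat.gcd_eq_right (card_subgroup_dvd_card H)]
  exact (eq_of_le_of_card_ge hle hcard).ge (orderOf_dvd_iff_pow_eq_one.mp hx)

theorem IsCyclic.card_inf {C : Type*} [CommGroup C] [Finite C] [IsCyclic C]
    (H K : Subgroup C) : Nat.card ↥(H ⊓ K) = (Nat.card H).gcd (Nat.card K) := by
  have hHK : H ⊓ K = (powMonoidHom ((Nat.card H).gcd (Nat.card K)) : C →* C).ker := by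
    ext x
    rw [mem_inf, mem_subgroup_iff_orderOf_dvd_card H, mem_subgroup_iff_orderOf_dvd_card K,
      MonoidHom.mem_ker, powMonoidHom_apply, ← orderOf_dvd_iff_pow_eq_one, Nat.dvd_gcd_iff]
  rw [hHK, IsCyclic.card_powMonoidHom_ker,
    Nat.gcd_eq_right ((Nat.gcd_dvd_left _ _).trans (card_subgroup_dvd_card H))]

theorem Subgroup.card_eq_card_ker_inf_mul_card_map {G Q : Type*} [Group G] [Group Q]
    (f : G →* Q) (H : Subgroup G) : Nat.card H = Nat.card ↥(f.ker ⊓ H) * Nat.card (H.map f) := by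
  rw [← relIndex_ker, ← inf_relIndex_right, ← relIndex_bot_left, ← relIndex_bot_left,
    relIndex_mul_relIndex _ _ _ bot_le inf_le_right]

theorem Subgroup.map_inf_of_ker_le {G Q : Type*} [Group G] [Group Q] (f : G →* Q)
    {H : Subgroup G} (hH : f.ker ≤ H) (K : Subgroup G) : (H ⊓ K).map f = H.map f ⊓ K.map f := by
  refine le_antisymm (map_inf_le H K f) ?_
  rintro _ ⟨⟨x, hx, rfl⟩, ⟨y, hy, hxy⟩⟩
  have hyx : y * x⁻¹ ∈ f.ker := by rw [MonoidHom.mem_ker, map_mul, map_inv, hxy, mul_inv_cancel]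
  exact ⟨y, ⟨by simpa using mul_mem (hH hyx) hx, hy⟩, hxy⟩

/-- Let `p` be a prime, `G` a finite group with a normal Sylow `p`-subgroup `P`
such that `G/P` is cyclic, and let `Γ₁, Γ₂` be subgroups of `G` with `P ⊆ Γ₁`.
Then `|Γ₁ ∩ Γ₂| = gcd(|Γ₁|, |Γ₂|)`. -/
theorem card_inf_eq_gcd_card_of_normal_sylow_le_cyclic_quotient
    (p : ℕ) [Fact p.Prime] {G : Type*} [Group G] [Finite G]
    (P : Sylow p G) [(P : Subgroup G).Normal]
    [IsCyclic (G ⧸ (P : Subgroup G))]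
    (Γ₁ Γ₂ : Subgroup G) (hP : (P : Subgroup G) ≤ Γ₁) :
    Nat.card ↥(Γ₁ ⊓ Γ₂) = Nat.gcd (Nat.card ↥Γ₁) (Nat.card ↥Γ₂) := by
  let f := QuotientGroup.mk' (P : Subgroup G)
  have hker : f.ker = P := QuotientGroup.ker_mk' _
  have hΓ₁ : Nat.card Γ₁ = Nat.card P * Nat.card (Γ₁.map f) := by
    rw [card_eq_card_ker_inf_mul_card_map f Γ₁, hker, inf_eq_left.mpr hP]
  have hΓ₂ : Nat.card Γ₂ = Nat.card ↥((P : Subgroup G) ⊓ Γ₂) * Nat.card (Γ₂.map f) := by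
    rw [card_eq_card_ker_inf_mul_card_map f Γ₂, hker]
  have hΓ₁₂ : Nat.card ↥(Γ₁ ⊓ Γ₂) =
      Nat.card ↥((P : Subgroup G) ⊓ Γ₂) * (Nat.card (Γ₁.map f)).gcd (Nat.card (Γ₂.map f)) := by
    let := IsCyclic.commGroup (α := G ⧸ (P : Subgroup G))
    rw [card_eq_card_ker_inf_mul_card_map f, hker, ← inf_assoc, inf_eq_left.mpr hP,
      map_inf_of_ker_le f (hker.le.trans hP), IsCyclic.card_inf]
  have hcop : (Nat.card P).Coprime (Nat.card (Γ₂.map f)) :=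
    P.card_coprime_index.coprime_dvd_right (card_subgroup_dvd_card _)
  rw [hΓ₁₂, hΓ₁, hΓ₂, Nat.gcd_mul_mul_of_dvd_of_coprime (card_dvd_of_le inf_le_left) hcop]
end

section
/- Let L = ℚ(j, ³√3) where j = exp(2iπ/3) is a primitive cube root of unity, and let 𝔮 be a prime ideal of the ring of integers of L lying over 𝔭 = 3ℤ. Then the ramification index e(𝔮/𝔭) equals 6; in particular, with K₁ = ℚ(³√3) and K₂ = ℚ(j·³√3), 𝔭₁ = 𝔮 ∩ O_{K₁}, 𝔭₂ = 𝔮 ∩ O_{K₂}, one has e(𝔭₁/𝔭) = e(𝔭₂/𝔭) = 3 and e(𝔮/𝔭) = 6 does not divide e(𝔭₁/𝔭) × e(𝔭₂/𝔭) = 9. -/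
/-!
In `𝓞 L` the prime `3` is associated both to a cube, `(³√3)³`, and to a square, `(1 - j)²`,
so `e(𝔮/3)` is divisible by `3` and by `2`; as `e(𝔮/3) ≤ [L : ℚ] ≤ [ℚ(j) : ℚ] [ℚ(³√3) : ℚ] = 6`,
it equals `6`. In a cubic field generated by a cube root `x` of `3`, the same bound together
with `x³ = 3` forces `e = 3`.
-/

open NumberField IntermediateField Ideal Polynomial Module

theorem Rat.pow_ne_prime {p : ℕ} (hp : p.Prime) {n : ℕ} (hn : n ≠ 1) (b : ℚ) : b ^ n ≠ p := by
  have := Fact.mk hp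
  intro h
  have hv := congrArg (padicValRat p) h
  rw [padicValRat.pow, padicValRat.self hp.one_lt] at hv
  have := Int.eq_one_of_mul_eq_one_right (by omega) hv
  omega

theorem irreducible_X_pow_three_sub_three : Irreducible (X ^ 3 - C 3 : ℚ[X]) :=
  X_pow_sub_C_irreducible_of_prime Nat.prime_three fun b ↦ by
    exact_mod_cast Rat.pow_ne_prime Nat.prime_three (by norm_num) b

theorem finrank_adjoin_simple_of_irreducible_X_pow_sub_C {K L : Type*} [Field K] [Field L]
    [Algebra K L] {n : ℕ} {a : K} (H : Irreducible (X ^ n - C a)) {x : L}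
    (hx : x ^ n = algebraMap K L a) : finrank K K⟮x⟯ = n := by
  have hmonic := monic_X_pow_sub_C a (ne_zero_of_irreducible_X_pow_sub_C H)
  have hroot : aeval x (X ^ n - C a) = 0 := by simp [hx]
  rw [adjoin.finrank ⟨_, hmonic, hroot⟩, ← minpoly.eq_of_irreducible_of_monic H hroot hmonic,
    natDegree_X_pow_sub_C]

theorem finrank_le_mul_of_adjoin_pair_eq_top {K L : Type*} [Field K] [Field L] [Algebra K L]
    {x y : L} (h : adjoin K {x, y} = ⊤) : finrank K L ≤ finrank K K⟮x⟯ * finrank K K⟮y⟯ := by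
  rw [← finrank_top', ← h, Set.insert_eq, adjoin_union]
  exact finrank_sup_le _ _

theorem IsPrimitiveRoot.finrank_adjoin_three {L : Type*} [Field L] [CharZero L] {ζ : L}
    (hζ : IsPrimitiveRoot ζ 3) : finrank ℚ ℚ⟮ζ⟯ = 2 := by
  rw [adjoin.finrank (hζ.isIntegral (by norm_num)).tower_top,
    ← cyclotomic_eq_minpoly_rat hζ (by norm_num), natDegree_cyclotomic,
    Nat.totient_prime Nat.prime_three]

theorem IsPrimitiveRoot.associated_one_sub_sq_three {R : Type*} [CommRing R] [IsDomain R] {ζ : R}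
    (hζ : IsPrimitiveRoot ζ 3) : Associated ((1 - ζ) ^ 2) 3 := by
  have hsum := hζ.geom_sum_eq_zero (by norm_num)
  simp only [Finset.sum_range_succ, Finset.sum_range_zero, pow_zero, pow_one] at hsum
  refine ⟨(hζ.isUnit (by norm_num)).unit ^ 2 * (-1), ?_⟩
  simp only [Units.val_mul, Units.val_pow_eq_pow_val, IsUnit.unit_spec, Units.val_neg,
    Units.val_one]
  linear_combination (2 - ζ) * hζ.pow_eq_one - hsum

namespace Ideal

theorem ramificationIdx'_le_finrank {F : Type*} [Field F] [NumberField F]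
    (p : Ideal ℤ) (Q : Ideal (𝓞 F)) [Q.IsPrime] [Q.LiesOver p] :
    p.ramificationIdx' Q ≤ finrank ℚ F := by
  rcases eq_or_ne p ⊥ with rfl | hp
  · simp [ramificationIdx'_bot]
  have := isPrime_of_liesOver Q p
  have := (Algebra.QuasiFinite.finite_primesOver (S := 𝓞 F) p).fintype
  rw [ramificationIdx'_eq_ramificationIdx p Q hp, ← RingOfIntegers.rank,
    ← sum_ramification_inertia_eq_finrank p (𝓞 F)]
  calc Q.ramificationIdx ℤ ≤ Q.ramificationIdx ℤ * Q.inertiaDeg ℤ :=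
        Nat.le_mul_of_pos_right _ (inertiaDeg_pos _ _)
    _ ≤ _ := Finset.single_le_sum (f := fun q : p.primesOver (𝓞 F) ↦
        q.1.ramificationIdx ℤ * q.1.inertiaDeg ℤ) (fun _ _ ↦ Nat.zero_le _)
        (Finset.mem_univ ⟨Q, ‹_›, ‹_›⟩)

theorem dvd_ramificationIdx'_of_associated_pow {R S : Type*} [CommRing R] [CommRing S]
    [Algebra R S] [IsDedekindDomain S] {a : R} (ha : algebraMap R S a ≠ 0) {x : S} {n : ℕ}
    (hx : Associated (x ^ n) (algebraMap R S a)) (Q : Ideal S) [hQ : Q.IsPrime] :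
    n ∣ (span {a}).ramificationIdx' Q := by
  have hmap : map (algebraMap R S) (span {a}) = span {x} ^ n := by
    rw [map_span, Set.image_singleton, span_singleton_pow]
    exact (span_singleton_eq_span_singleton.mpr hx).symm
  have hmap0 : map (algebraMap R S) (span {a}) ≠ ⊥ := by
    simpa [map_span, span_singleton_eq_bot] using ha
  rcases eq_or_ne Q ⊥ with rfl | hQ0
  · rw [ramificationIdx'_of_not_le (by simpa using hmap0)]
    exact dvd_zero n
  rw [IsDedekindDomain.ramificationIdx'_eq_normalizedFactors_count hmap0 hQ hQ0, hmap,
    UniqueFactorizationMonoid.normalizedFactors_pow, Multiset.count_nsmul]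
  exact dvd_mul_right _ _

theorem ramificationIdx'_eq_of_dvd_of_finrank_le {F : Type*} [Field F] [NumberField F]
    {p : ℤ} (hp : p ≠ 0) (Q : Ideal (𝓞 F)) [Q.IsPrime] [Q.LiesOver (span {p})] {n : ℕ}
    (hdvd : n ∣ (span {p}).ramificationIdx' Q) (hF : finrank ℚ F ≤ n) :
    (span {p}).ramificationIdx' Q = n :=
  le_antisymm ((ramificationIdx'_le_finrank _ Q).trans hF) <| Nat.le_of_dvd
    (Nat.pos_of_ne_zero <| IsDedekindDomain.ramificationIdx'_ne_zero_of_liesOver Q (by simpa))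
    hdvd

theorem dvd_ramificationIdx'_of_pow_eq {F : Type*} [Field F] [NumberField F] {a : ℤ}
    (ha : a ≠ 0) {x : F} {n : ℕ} (hn : n ≠ 0) (hx : x ^ n = a) (Q : Ideal (𝓞 F)) [Q.IsPrime] :
    n ∣ (span {a}).ramificationIdx' Q := by
  let y : 𝓞 F := ⟨x, IsIntegral.of_pow (Nat.pos_of_ne_zero hn) (hx ▸ isIntegral_algebraMap)⟩
  refine dvd_ramificationIdx'_of_associated_pow (x := y) (by simpa using ha) (.of_eq ?_) Q
  exact RingOfIntegers.ext (by push_cast; exact hx)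

end Ideal

theorem finrank_adjoin_cube_root_three {L : Type*} [Field L] [CharZero L] {x : L}
    (hx : x ^ 3 = 3) : finrank ℚ ℚ⟮x⟯ = 3 :=
  finrank_adjoin_simple_of_irreducible_X_pow_sub_C irreducible_X_pow_three_sub_three
    (by simpa using hx)

theorem ramificationIdx'_comap_adjoin_cube_root_three {L : Type*} [Field L] [NumberField L]
    {x : L} (hx : x ^ 3 = 3) (𝔮 : Ideal (𝓞 L)) [𝔮.IsPrime] [𝔮.LiesOver (span {(3 : ℤ)})] :
    (span {(3 : ℤ)}).ramificationIdx' (𝔮.comap (algebraMap (𝓞 ℚ⟮x⟯) (𝓞 L))) = 3 := by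
  have hgen : AdjoinSimple.gen ℚ x ^ 3 = ((3 : ℤ) : ℚ⟮x⟯) := Subtype.ext (by push_cast; exact hx)
  exact ramificationIdx'_eq_of_dvd_of_finrank_le three_ne_zero _
    (dvd_ramificationIdx'_of_pow_eq three_ne_zero three_ne_zero hgen _)
    (finrank_adjoin_cube_root_three hx).le

/-- Let `L = ℚ(j, ³√3)` with `j` a primitive cube root of unity and `c = ³√3`, and let
`𝔮` be a prime ideal of `𝓞 L` lying over `𝔭 = 3ℤ`. Set `K₁ = ℚ(³√3)`, `K₂ = ℚ(j·³√3)`,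
`𝔭₁ = 𝔮 ∩ 𝓞 K₁`, `𝔭₂ = 𝔮 ∩ 𝓞 K₂`. Then `e(𝔭₁/𝔭) = e(𝔭₂/𝔭) = 3` and
`e(𝔮/𝔭) = 6`, which does not divide `e(𝔭₁/𝔭) × e(𝔭₂/𝔭) = 9`. -/
theorem ramificationIdx_not_dvd_mul_example
    (L : Type*) [Field L] [NumberField L]
    (j c : L) (hj : IsPrimitiveRoot j 3) (hc : c ^ 3 = 3)
    (hL : IntermediateField.adjoin ℚ {j, c} = ⊤)
    (K₁ K₂ : IntermediateField ℚ L) (hK₁ : K₁ = ℚ⟮c⟯) (hK₂ : K₂ = ℚ⟮j * c⟯)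
    (𝔮 : Ideal (𝓞 L)) [𝔮.IsPrime]
    (h𝔮 : 𝔮.comap (algebraMap ℤ (𝓞 L)) = Ideal.span {(3 : ℤ)})
    (𝔭₁ : Ideal (𝓞 K₁)) (h𝔭₁ : 𝔭₁ = 𝔮.comap (algebraMap (𝓞 K₁) (𝓞 L)))
    (𝔭₂ : Ideal (𝓞 K₂)) (h𝔭₂ : 𝔭₂ = 𝔮.comap (algebraMap (𝓞 K₂) (𝓞 L))) :
    Ideal.ramificationIdx' (Ideal.span {(3 : ℤ)}) 𝔮 = 6 ∧
    Ideal.ramificationIdx' (Ideal.span {(3 : ℤ)}) 𝔭₁ = 3 ∧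
    Ideal.ramificationIdx' (Ideal.span {(3 : ℤ)}) 𝔭₂ = 3 ∧
    ¬ Ideal.ramificationIdx' (Ideal.span {(3 : ℤ)}) 𝔮 ∣
        Ideal.ramificationIdx' (Ideal.span {(3 : ℤ)}) 𝔭₁ *
          Ideal.ramificationIdx' (Ideal.span {(3 : ℤ)}) 𝔭₂ := by
  subst hK₁ hK₂ h𝔭₁ h𝔭₂
  have : 𝔮.LiesOver (span {(3 : ℤ)}) := ⟨h𝔮.symm⟩
  have hjc : (j * c) ^ 3 = 3 := by rw [mul_pow, hj.pow_eq_one, one_mul, hc]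
  have he₁ := ramificationIdx'_comap_adjoin_cube_root_three hc 𝔮
  have he₂ := ramificationIdx'_comap_adjoin_cube_root_three hjc 𝔮
  have h3 : 3 ∣ (span {(3 : ℤ)}).ramificationIdx' 𝔮 :=
    dvd_ramificationIdx'_of_pow_eq three_ne_zero three_ne_zero (by exact_mod_cast hc) 𝔮
  have h2 : 2 ∣ (span {(3 : ℤ)}).ramificationIdx' 𝔮 :=
    dvd_ramificationIdx'_of_associated_pow (by simp)
      (by simpa using hj.toInteger_isPrimitiveRoot.associated_one_sub_sq_three) 𝔮
  have hdeg : finrank ℚ L ≤ 6 :=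
    calc finrank ℚ L ≤ finrank ℚ ℚ⟮j⟯ * finrank ℚ ℚ⟮c⟯ := finrank_le_mul_of_adjoin_pair_eq_top hL
      _ = 6 := by rw [hj.finrank_adjoin_three, finrank_adjoin_cube_root_three hc]
  have he : (span {(3 : ℤ)}).ramificationIdx' 𝔮 = 6 :=
    ramificationIdx'_eq_of_dvd_of_finrank_le three_ne_zero 𝔮
      (Nat.Coprime.mul_dvd_of_dvd_of_dvd (by norm_num) h2 h3) hdeg
  refine ⟨he, he₁, he₂, ?_⟩
  rw [he, he₁, he₂]
  norm_num
end
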